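/- Let G be a graph and V₁, V₂ disjoint subsets of V(G). If for every s₁-subset S₁ ⊆ V₁ and every s₂-subset S₂ ⊆ V₂ there is an edge of G between S₁ and S₂, then π(G) ≥ min(log₂(|V₁|/s₁), log₂(|V₂|/s₂)). -/

import Mathlib

/-!
Given `k` permutations, halve the two sides `k` times: a median `x` of `A` under one permutation
cuts `B` into the parts before and after `x`, one of which keeps half of `B` and lies wholly on
one side of the matching half of `A`. What survives is `A ⊆ V₁`, `B ⊆ V₂` with `|Vᵢ| ≤ 2ᵏ |·|`
that every permutation places on opposite sides. If `k < log₂(|Vᵢ|/sᵢ)` for both `i`, then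
`|A| > s₁` and `|B| > s₂`, so there are two disjoint edges `ab`, `a'b'` between `A` and `B`, and no
permutation putting `A` before `B` (or after it) separates them.
-/

/-- A permutation `σ` separates two sets `A`, `B`: all of `A` comes before all
of `B`, or vice versa. -/
def SepPerm {V : Type*} {n : ℕ} (σ : V ≃ Fin n) (A B : Set V) : Prop :=
  (∀ a ∈ A, ∀ b ∈ B, σ a < σ b) ∨ (∀ a ∈ A, ∀ b ∈ B, σ b < σ a)

/-- A family of permutations is pairwise suitable for a graph `G` if every
pair of disjoint edges is separated by some member of the family. -/
def PWSuitable {V : Type*} [Fintype V] (G : SimpleGraph V)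
    {k : ℕ} (F : Fin k → (V ≃ Fin (Fintype.card V))) : Prop :=
  ∀ e ∈ G.edgeSet, ∀ f ∈ G.edgeSet, (∀ x, ¬(x ∈ e ∧ x ∈ f)) →
    ∃ i, SepPerm (F i) {x | x ∈ e} {x | x ∈ f}

/-- The separation dimension of a graph: the minimum size of a pairwise
suitable family of permutations of the vertex set. -/
noncomputable def sepDim {V : Type*} [Fintype V] (G : SimpleGraph V) : ℕ :=
  sInf {k : ℕ | ∃ F : Fin k → (V ≃ Fin (Fintype.card V)), PWSuitable G F}

open Finset Function

theorem Finset.exists_median {ι α : Type*} [LinearOrder α] (f : ι → α) {s : Finset ι}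
    (hs : s.Nonempty) :
    ∃ x ∈ s, #s ≤ 2 * #{y ∈ s | f y ≤ f x} ∧ #s ≤ 2 * #{y ∈ s | f x ≤ f y} := by
  have hlarge : {x ∈ s | #s ≤ 2 * #{y ∈ s | f y ≤ f x}}.Nonempty := by
    obtain ⟨z, hz, hmax⟩ := s.exists_max_image f hs
    refine ⟨z, mem_filter.2 ⟨hz, ?_⟩⟩
    rw [filter_true_of_mem hmax]
    omega
  obtain ⟨x, hx, hmin⟩ := exists_min_image _ f hlarge
  rw [mem_filter] at hx
  refine ⟨x, hx.1, hx.2, ?_⟩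
  have hbelow : 2 * #{y ∈ s | f y < f x} < #s := by
    rcases (s.filter (f · < f x)).eq_empty_or_nonempty with hempty | hne
    · rw [hempty, card_empty]
      simpa using hs.card_pos
    obtain ⟨w, hw, hwmax⟩ := exists_max_image _ f hne
    rw [mem_filter] at hw
    have hcut : {y ∈ s | f y < f x} = {y ∈ s | f y ≤ f w} := filter_congr fun y hy =>
      ⟨fun h => hwmax y (mem_filter.2 ⟨hy, h⟩), fun h => h.trans_lt hw.2⟩
    rw [hcut]
    by_contra! hw'
    exact (hmin w (mem_filter.2 ⟨hw.1, hw'⟩)).not_gt hw.2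
  have hsplit := card_filter_add_card_filter_not (s := s) (fun y => f y < f x)
  simp only [not_lt] at hsplit
  omega

theorem exists_separated_halves {V α : Type*} [LinearOrder α] {f : V → α} (hf : Injective f)
    {A B : Finset V} (hAB : Disjoint A B) :
    ∃ A' ⊆ A, ∃ B' ⊆ B, #A ≤ 2 * #A' ∧ #B ≤ 2 * #B' ∧
      ((∀ a ∈ A', ∀ b ∈ B', f a < f b) ∨ (∀ a ∈ A', ∀ b ∈ B', f b < f a)) := by
  rcases A.eq_empty_or_nonempty with rfl | hA
  · exact ⟨∅, subset_rfl, B, subset_rfl, by simp, by omega, by simp⟩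
  obtain ⟨x, hx, hlow, hhigh⟩ := A.exists_median f hA
  by_cases hBlow : #B ≤ 2 * #{b ∈ B | f b < f x}
  · refine ⟨_, filter_subset _ _, _, filter_subset _ _, hhigh, hBlow, Or.inr ?_⟩
    intro a ha b hb
    exact (mem_filter.1 hb).2.trans_le (mem_filter.1 ha).2
  · have hsplit := card_filter_add_card_filter_not (s := B) (fun b => f b < f x)
    refine ⟨_, filter_subset _ _, {b ∈ B | ¬ f b < f x}, filter_subset _ _, hlow, by omega,
      Or.inl ?_⟩
    intro a ha b hb
    rw [mem_filter] at ha
    rw [mem_filter, not_lt] at hb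
    have hbx : f x ≠ f b := fun h => disjoint_left.1 hAB hx (hf h ▸ hb.1)
    exact ha.2.trans_lt (hb.2.lt_of_ne hbx)

section SepPerm

variable {V : Type*} {n : ℕ}

theorem SepPerm.mono {σ : V ≃ Fin n} {A B A' B' : Set V} (h : SepPerm σ A B) (hA : A' ⊆ A)
    (hB : B' ⊆ B) : SepPerm σ A' B' :=
  h.imp (fun h a ha b hb => h a (hA ha) b (hB hb)) (fun h a ha b hb => h a (hA ha) b (hB hb))

theorem SepPerm.not_sepPerm_edges {σ : V ≃ Fin n} {A B : Set V} (h : SepPerm σ A B)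
    {a a' b b' : V} (ha : a ∈ A) (ha' : a' ∈ A) (hb : b ∈ B) (hb' : b' ∈ B) :
    ¬ SepPerm σ {x | x ∈ s(a, b)} {x | x ∈ s(a', b')} := by
  have hab : a ∈ s(a, b) ∧ b ∈ s(a, b) := by simp
  have ha'b' : a' ∈ s(a', b') ∧ b' ∈ s(a', b') := by simp
  rcases h with h | h <;> rintro (h' | h')
  · exact lt_asymm (h a' ha' b hb) (h' b hab.2 a' ha'b'.1)
  · exact lt_asymm (h a ha b' hb') (h' a hab.1 b' ha'b'.2)
  · exact lt_asymm (h a ha b' hb') (h' a hab.1 b' ha'b'.2)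
  · exact lt_asymm (h a' ha' b hb) (h' b hab.2 a' ha'b'.1)

theorem exists_large_subsets_forall_sepPerm {k : ℕ} (F : Fin k → V ≃ Fin n) {A B : Finset V}
    (hAB : Disjoint A B) :
    ∃ A' ⊆ A, ∃ B' ⊆ B, #A ≤ 2 ^ k * #A' ∧ #B ≤ 2 ^ k * #B' ∧
      ∀ i, SepPerm (F i) A' B' := by
  induction k with
  | zero => exact ⟨A, subset_rfl, B, subset_rfl, by simp, by simp, finZeroElim⟩
  | succ k ih =>
    obtain ⟨A₁, hA₁, B₁, hB₁, hcardA₁, hcardB₁, hsep₁⟩ := ih (fun i => F i.castSucc)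
    obtain ⟨A₂, hA₂, B₂, hB₂, hcardA₂, hcardB₂, hsep₂⟩ :=
      exists_separated_halves (F (Fin.last k)).injective (hAB.mono hA₁ hB₁)
    refine ⟨A₂, hA₂.trans hA₁, B₂, hB₂.trans hB₁, ?_, ?_, Fin.lastCases hsep₂ fun i =>
      (hsep₁ i).mono (coe_subset.2 hA₂) (coe_subset.2 hB₂)⟩
    · rw [pow_succ, mul_assoc]
      exact hcardA₁.trans (Nat.mul_le_mul_left _ hcardA₂)
    · rw [pow_succ, mul_assoc]
      exact hcardB₁.trans (Nat.mul_le_mul_left _ hcardB₂)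

end SepPerm

section Suitable

variable {V : Type*} [Fintype V] [DecidableEq V]

theorem exists_equivFin_lt_of_mem_of_notMem (S : Finset V) :
    ∃ σ : V ≃ Fin (Fintype.card V), ∀ x ∈ S, ∀ y ∉ S, σ x < σ y := by
  have hcard : Fintype.card {x // x ∈ S} + Fintype.card {x // x ∉ S} = Fintype.card V := by
    rw [← Fintype.card_sum]
    exact Fintype.card_congr (Equiv.sumCompl _)
  refine ⟨((Equiv.sumCompl (· ∈ S)).symm.trans ((Equiv.sumCongr (Fintype.equivFin _)
    (Fintype.equivFin _)).trans finSumFinEquiv)).trans (finCongr hcard), fun x hx y hy => ?_⟩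
  simp only [Equiv.trans_apply, Equiv.sumCompl_symm_apply_of_pos hx,
    Equiv.sumCompl_symm_apply_of_neg hy, Equiv.sumCongr_apply, Sum.map_inl, Sum.map_inr,
    finSumFinEquiv_apply_left, finSumFinEquiv_apply_right, finCongr_apply, Fin.lt_def,
    Fin.val_cast, Fin.val_castAdd, Fin.val_natAdd]
  exact Nat.lt_add_right _ (Fintype.equivFin S ⟨x, hx⟩).isLt

theorem exists_pwSuitable (G : SimpleGraph V) :
    ∃ k, ∃ F : Fin k → V ≃ Fin (Fintype.card V), PWSuitable G F := by
  -- a permutation listing `a` and `b` first separates `s(a, b)` from every edge avoiding it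
  choose σ hσ using fun p : V × V => exists_equivFin_lt_of_mem_of_notMem ({p.1, p.2} : Finset V)
  refine ⟨_, fun i => σ ((Fintype.equivFin (V × V)).symm i), ?_⟩
  intro e _ f _ hdisj
  induction e using Sym2.ind with
  | h a b =>
    refine ⟨Fintype.equivFin (V × V) (a, b), Or.inl fun x hx y hy => ?_⟩
    dsimp only
    rw [Equiv.symm_apply_apply]
    exact hσ (a, b) x (by simpa using hx) y (by simpa using fun h => hdisj y ⟨h, hy⟩)

theorem exists_pwSuitable_sepDim (G : SimpleGraph V) :
    ∃ F : Fin (sepDim G) → V ≃ Fin (Fintype.card V), PWSuitable G F :=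
  Nat.sInf_mem (exists_pwSuitable G)

end Suitable

theorem exists_disjoint_edges {V : Type*} [DecidableEq V] (G : SimpleGraph V) {A B : Finset V}
    (hAB : Disjoint A B) {s₁ s₂ : ℕ}
    (h : ∀ S₁ ⊆ A, #S₁ = s₁ → ∀ S₂ ⊆ B, #S₂ = s₂ → ∃ a ∈ S₁, ∃ b ∈ S₂, G.Adj a b)
    (hA : s₁ < #A) (hB : s₂ < #B) :
    ∃ a ∈ A, ∃ a' ∈ A, ∃ b ∈ B, ∃ b' ∈ B, s(a, b) ∈ G.edgeSet ∧ s(a', b') ∈ G.edgeSet ∧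
      ∀ x, ¬(x ∈ s(a, b) ∧ x ∈ s(a', b')) := by
  have hedge : ∀ A' ⊆ A, s₁ ≤ #A' → ∀ B' ⊆ B, s₂ ≤ #B' → ∃ a ∈ A', ∃ b ∈ B', G.Adj a b := by
    intro A' hA' hs₁ B' hB' hs₂
    obtain ⟨S₁, hS₁, hcard₁⟩ := exists_subset_card_eq hs₁
    obtain ⟨S₂, hS₂, hcard₂⟩ := exists_subset_card_eq hs₂
    obtain ⟨a, ha, b, hb, hab⟩ := h S₁ (hS₁.trans hA') hcard₁ S₂ (hS₂.trans hB') hcard₂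
    exact ⟨a, hS₁ ha, b, hS₂ hb, hab⟩
  obtain ⟨a, ha, b, hb, hab⟩ := hedge A subset_rfl hA.le B subset_rfl hB.le
  obtain ⟨a', ha', b', hb', ha'b'⟩ :=
    hedge (A.erase a) (erase_subset _ _) (by rw [card_erase_of_mem ha]; omega)
      (B.erase b) (erase_subset _ _) (by rw [card_erase_of_mem hb]; omega)
  obtain ⟨ha'a, ha'⟩ := mem_erase.1 ha'
  obtain ⟨hb'b, hb'⟩ := mem_erase.1 hb'
  refine ⟨a, ha, a', ha', b, hb, b', hb', hab, ha'b', ?_⟩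
  rintro x ⟨hx, hx'⟩
  rw [Sym2.mem_iff] at hx hx'
  rcases hx with rfl | rfl <;> rcases hx' with rfl | rfl
  · exact ha'a rfl
  · exact disjoint_left.1 hAB ha hb'
  · exact disjoint_left.1 hAB ha' hb
  · exact hb'b rfl

theorem lt_of_le_two_pow_mul_of_lt_logb {m c s k : ℕ} (hm : m ≤ 2 ^ k * c)
    (hk : (k : ℝ) < Real.logb 2 (m / s)) : s < c := by
  by_contra! hc
  refine hk.not_ge ?_
  rcases Nat.eq_zero_or_pos s with rfl | hs
  · simp
  rcases Nat.eq_zero_or_pos m with rfl | hm₀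
  · simp
  rw [Real.logb_le_iff_le_rpow one_lt_two (by positivity), Real.rpow_natCast,
    div_le_iff₀ (by positivity)]
  exact_mod_cast hm.trans (Nat.mul_le_mul_left _ hc)

/-- Bipartition lower bound: if `V₁`, `V₂` are disjoint vertex subsets such
that there is an edge between every `s₁`-subset of `V₁` and every `s₂`-subset
of `V₂`, then `π(G) ≥ min (log₂(|V₁|/s₁)) (log₂(|V₂|/s₂))`. -/
theorem stmt14 {V : Type*} [Fintype V] [DecidableEq V] (G : SimpleGraph V)
    (V₁ V₂ : Finset V) (hd : Disjoint V₁ V₂) (s₁ s₂ : ℕ)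
    (h : ∀ S₁ ⊆ V₁, S₁.card = s₁ → ∀ S₂ ⊆ V₂, S₂.card = s₂ →
      ∃ a ∈ S₁, ∃ b ∈ S₂, G.Adj a b) :
    min (Real.logb 2 ((V₁.card : ℝ) / (s₁ : ℝ)))
        (Real.logb 2 ((V₂.card : ℝ) / (s₂ : ℝ))) ≤ (sepDim G : ℝ) := by
  obtain ⟨F, hF⟩ := exists_pwSuitable_sepDim G
  obtain ⟨A, hA, B, hB, hcardA, hcardB, hsep⟩ := exists_large_subsets_forall_sepPerm F hd
  by_contra! hlt
  obtain ⟨hlt₁, hlt₂⟩ := lt_min_iff.1 hlt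
  obtain ⟨a, ha, a', ha', b, hb, b', hb', hab, ha'b', hdisj⟩ :=
    exists_disjoint_edges G (hd.mono hA hB)
      (fun S₁ hS₁ h₁ S₂ hS₂ h₂ => h S₁ (hS₁.trans hA) h₁ S₂ (hS₂.trans hB) h₂)
      (lt_of_le_two_pow_mul_of_lt_logb hcardA hlt₁) (lt_of_le_two_pow_mul_of_lt_logb hcardB hlt₂)
  obtain ⟨i, hi⟩ := hF _ hab _ ha'b' hdisj
  exact (hsep i).not_sepPerm_edges ha ha' hb hb' hi
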